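/- Let H and H∂ be Hermitian complex matrices of the same size with H·H∂ = H∂·H, let A be any complex matrix of that size, let β ≥ 0, and let ε ≥ 0. For s ∈ [0,1] set ρ(s) := exp(−β(H − s·H∂))/tr exp(−β(H − s·H∂)). If |Cor_{ρ(s)}(H∂, A)| ≤ ε for every s ∈ [0,1], then |tr(ρ(0)·A) − tr(ρ(1)·A)| ≤ β·ε. (This is the error bound of the paper's commuting case, Eq. (10), in conditional form: taking ε = ‖A‖·‖H∂‖·e^{−l/ξ} from the clustering assumption yields |tr(ρ A) − tr(ρ^{(L_l)} A)| ≤ β‖A‖‖H∂‖e^{−l/ξ}.) -/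

import Mathlib

open scoped Matrix.Norms.L2Operator

/-- `exp(−β·(H − s·H∂))`, the unnormalized Gibbs operator of the interpolated Hamiltonian
`H(s) = H − s·H∂`. -/
noncomputable def expH {N : ℕ} (H Hpart : Matrix (Fin N) (Fin N) ℂ) (β s : ℝ) :
    Matrix (Fin N) (Fin N) ℂ :=
  NormedSpace.exp ((-(β : ℂ)) • (H - (s : ℂ) • Hpart))

/-- The Gibbs expectation `⟨X⟩_{ρ(s)} = tr(exp(−β(H − s·H∂))·X)/tr(exp(−β(H − s·H∂)))`. -/
noncomputable def gibbsAvg {N : ℕ} (H Hpart : Matrix (Fin N) (Fin N) ℂ) (β s : ℝ)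
    (X : Matrix (Fin N) (Fin N) ℂ) : ℂ :=
  (expH H Hpart β s * X).trace / (expH H Hpart β s).trace

/-!
For commuting `H` and `H∂` the Gibbs operator factors as `exp(−βH) · exp(sβH∂)`, so
differentiating `tr(exp(−β(H − sH∂))·X)` in `s` just inserts `βH∂` next to `X`. The quotient rule
then gives `d/ds ⟨A⟩_{ρ(s)} = β · Cor_{ρ(s)}(H∂, A)`, and the mean value inequality on `[0, 1]`
finishes the proof.
-/

open NormedSpace

namespace Matrix

variable {n : Type*} [Fintype n] [DecidableEq n]

open scoped ComplexOrder in
theorem trace_exp_ne_zero_of_isHermitian [Nonempty n] {M : Matrix n n ℂ}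
    (hM : M.IsHermitian) : (exp M).trace ≠ 0 := by
  set B := exp ((2⁻¹ : ℝ) • M)
  have hB : Bᴴ = B := (hM.smul (IsSelfAdjoint.all _)).exp
  have hsq : exp M = Bᴴ * B := by
    rw [hB, ← sq, ← exp_nsmul]
    congr 1
    module
  rw [hsq, Ne, trace_conjTranspose_mul_self_eq_zero_iff]
  exact (isUnit_exp _).ne_zero

end Matrix

noncomputable def gibbsCor {N : ℕ} (H Hpart : Matrix (Fin N) (Fin N) ℂ) (β s : ℝ)
    (X Y : Matrix (Fin N) (Fin N) ℂ) : ℂ :=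
  gibbsAvg H Hpart β s (X * Y) - gibbsAvg H Hpart β s X * gibbsAvg H Hpart β s Y

section Gibbs

variable {N : ℕ} {H Hpart : Matrix (Fin N) (Fin N) ℂ}

theorem isHermitian_interpolatedHamiltonian (hH : H.IsHermitian) (hHpart : Hpart.IsHermitian)
    (β s : ℝ) : ((-(β : ℂ)) • (H - (s : ℂ) • Hpart)).IsHermitian := by
  have hreal (r : ℝ) : IsSelfAdjoint (r : ℂ) := Complex.conj_ofReal r
  exact (hH.sub (hHpart.smul (hreal s))).smul (hreal β).neg

theorem expH_eq_mul_exp (hcomm : Commute H Hpart) (β s : ℝ) :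
    expH H Hpart β s = exp ((-(β : ℂ)) • H) * exp ((s : ℂ) • ((β : ℂ) • Hpart)) := by
  rw [expH, ← Matrix.exp_add_of_commute _ _ (((hcomm.smul_left _).smul_right _).smul_right _)]
  congr 1
  module

theorem hasDerivAt_trace_expH_mul (hcomm : Commute H Hpart) (β s : ℝ)
    (X : Matrix (Fin N) (Fin N) ℂ) :
    HasDerivAt (fun t : ℝ => (expH H Hpart β t * X).trace)
      (β * (expH H Hpart β s * (Hpart * X)).trace) s := by
  have hexp := ((hasDerivAt_exp_smul_const ((β : ℂ) • Hpart) (s : ℂ)).const_mul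
    (exp ((-(β : ℂ)) • H))).mul_const X
  have htrace := (Matrix.traceLinearMap (Fin N) ℂ ℂ).toContinuousLinearMap.hasFDerivAt
    |>.comp_hasDerivAt _ hexp
  convert htrace.comp_ofReal using 1
  · funext t
    simp [expH_eq_mul_exp hcomm]
  · simp [expH_eq_mul_exp hcomm, Matrix.mul_assoc]

theorem hasDerivAt_gibbsAvg [NeZero N] (hH : H.IsHermitian) (hHpart : Hpart.IsHermitian)
    (hcomm : Commute H Hpart) (β s : ℝ) (A : Matrix (Fin N) (Fin N) ℂ) :
    HasDerivAt (fun t : ℝ => gibbsAvg H Hpart β t A) (β * gibbsCor H Hpart β s Hpart A) s := by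
  have hZ : (expH H Hpart β s).trace ≠ 0 :=
    Matrix.trace_exp_ne_zero_of_isHermitian (isHermitian_interpolatedHamiltonian hH hHpart β s)
  have hnum := hasDerivAt_trace_expH_mul hcomm β s A
  have hden := hasDerivAt_trace_expH_mul hcomm β s 1
  simp only [mul_one] at hden
  refine (hnum.div hden hZ).congr_deriv ?_
  simp only [gibbsCor, gibbsAvg]
  field_simp

end Gibbs

theorem commuting_case_error_bound_general {N : ℕ} (H Hpart A : Matrix (Fin N) (Fin N) ℂ)
    (hH : H.IsHermitian) (hHpart : Hpart.IsHermitian) (hcomm : H * Hpart = Hpart * H)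
    (β ε : ℝ) (hβ : 0 ≤ β)
    (hcor : ∀ s ∈ Set.Icc (0 : ℝ) 1,
      ‖gibbsAvg H Hpart β s (Hpart * A) -
          gibbsAvg H Hpart β s Hpart * gibbsAvg H Hpart β s A‖ ≤ ε) :
    ‖gibbsAvg H Hpart β 0 A - gibbsAvg H Hpart β 1 A‖ ≤ β * ε := by
  rcases N.eq_zero_or_pos with rfl | hN
  -- over `Fin 0` every trace is `0`, so both averages are the junk value `0 / 0 = 0`
  · simpa [gibbsAvg] using mul_nonneg hβ ((norm_nonneg _).trans (hcor 0 (by simp)))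
  have : NeZero N := ⟨hN.ne'⟩
  have hderiv : ∀ s ∈ Set.Icc (0 : ℝ) 1, HasDerivWithinAt (fun t => gibbsAvg H Hpart β t A)
      (β * gibbsCor H Hpart β s Hpart A) (Set.Icc 0 1) s :=
    fun s _ => (hasDerivAt_gibbsAvg hH hHpart hcomm β s A).hasDerivWithinAt
  have hbound : ∀ s ∈ Set.Ico (0 : ℝ) 1, ‖(β : ℂ) * gibbsCor H Hpart β s Hpart A‖ ≤ β * ε := by
    intro s hs
    rw [norm_mul, Complex.norm_of_nonneg hβ]
    exact mul_le_mul_of_nonneg_left (hcor s (Set.Ico_subset_Icc_self hs)) hβ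
  simpa [norm_sub_rev] using
    norm_image_sub_le_of_norm_deriv_le_segment' hderiv hbound 1 (by simp)

/-- The error bound of the paper's commuting case (Eq. (10)), in conditional form: for
commuting Hermitian `H`, `H∂` and `ρ(s) := exp(−β(H − s·H∂))/tr exp(−β(H − s·H∂))`, if the
correlation `Cor_{ρ(s)}(H∂, A) = ⟨H∂·A⟩_{ρ(s)} − ⟨H∂⟩_{ρ(s)}·⟨A⟩_{ρ(s)}` has modulus at most
`ε` for all `s ∈ [0,1]`, then `|tr(ρ(0)·A) − tr(ρ(1)·A)| ≤ β·ε`. -/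
theorem commuting_case_error_bound {N : ℕ} (H Hpart A : Matrix (Fin N) (Fin N) ℂ)
    (hH : H.IsHermitian) (hHpart : Hpart.IsHermitian) (hcomm : H * Hpart = Hpart * H)
    (β ε : ℝ) (hβ : 0 ≤ β) (hε : 0 ≤ ε)
    (hcor : ∀ s ∈ Set.Icc (0 : ℝ) 1,
      ‖gibbsAvg H Hpart β s (Hpart * A) -
          gibbsAvg H Hpart β s Hpart * gibbsAvg H Hpart β s A‖ ≤ ε) :
    ‖gibbsAvg H Hpart β 0 A - gibbsAvg H Hpart β 1 A‖ ≤ β * ε :=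
  commuting_case_error_bound_general H Hpart A hH hHpart hcomm β ε hβ hcor
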